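/- arXiv:1910.13132 — 4 statements merged into one kernel-verified Lean document; each statement's English description precedes it below -/
import Mathlib

section
/- Let I ⊆ ℝ be an open interval containing 0, let α > 0, and let φ : I \ {0} → ℝ be a C¹ function such that lim_{t→0} φ(t) = 0 and lim_{t→0} (φ'(t) + α·φ(t)/t) = 0. Then lim_{t→0} φ(t)/t = 0 and lim_{t→0} φ'(t) = 0; consequently, the function obtained by extending φ to I with φ(0) = 0 is of class C¹ on all of I and its derivative at 0 equals 0. -/
/-!
Since `(t ^ α * φ t)' = t ^ α * (φ' t + α * φ t / t)` for `t > 0`, a bound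
`φ' t + α * φ t / t ≤ (α + 1) * c` on `(0, δ)` makes `t ^ α * (φ t - c * t)` antitone
there; as this tends to `0` at `0⁺`, it is nonpositive, i.e. `φ t ≤ c * t`. Applied to
`±φ` with `c` arbitrarily small this gives `φ t / t → 0` at `0⁺`; reflecting `t ↦ -t`
gives it at `0⁻`. Then `φ' = (φ' + α * φ / t) - α * φ / t → 0`, and `φ t / t` is the
difference quotient of the extension by `0` at `0`.
-/

open Set Filter Topology

section TendstoDiv

variable {α c δ : ℝ} {φ φ' : ℝ → ℝ}

theorem le_mul_of_deriv_add_mul_div_le (hα : 0 ≤ α)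
    (hderiv : ∀ t ∈ Ioo 0 δ, HasDerivAt φ (φ' t) t)
    (hbound : ∀ t ∈ Ioo 0 δ, φ' t + α * (φ t / t) ≤ (α + 1) * c)
    (hlim : Tendsto φ (𝓝[>] 0) (𝓝 0)) :
    ∀ t ∈ Ioo 0 δ, φ t ≤ c * t := by
  set G : ℝ → ℝ := fun s => s ^ α * (φ s - c * s)
  have hG : ∀ s ∈ Ioo 0 δ,
      HasDerivAt G (s ^ α * (φ' s + α * (φ s / s) - (α + 1) * c)) s := by
    intro s hs
    refine ((Real.hasDerivAt_rpow_const (p := α) (Or.inl hs.1.ne')).mul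
      ((hderiv s hs).sub ((hasDerivAt_id' s).const_mul c))).congr_deriv ?_
    have hs0 : s ≠ 0 := hs.1.ne'
    rw [Pi.sub_apply, Real.rpow_sub_one hs0]
    field_simp
    ring
  have hanti : AntitoneOn G (Ioo 0 δ) := by
    refine antitoneOn_of_hasDerivWithinAt_nonpos (convex_Ioo 0 δ)
      (f' := fun s => s ^ α * (φ' s + α * (φ s / s) - (α + 1) * c))
      (fun s hs => (hG s hs).continuousAt.continuousWithinAt) ?_ ?_ <;> rw [interior_Ioo]
    · exact fun s hs => (hG s hs).hasDerivWithinAt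
    · exact fun s hs => mul_nonpos_of_nonneg_of_nonpos (Real.rpow_nonneg hs.1.le α)
        (sub_nonpos.2 (hbound s hs))
  have hGlim : Tendsto G (𝓝[>] 0) (𝓝 0) := by
    have hpow : Tendsto (fun s : ℝ => s ^ α) (𝓝[>] 0) (𝓝 (0 ^ α)) :=
      (Real.continuousAt_rpow_const 0 α (Or.inr hα)).tendsto.mono_left nhdsWithin_le_nhds
    have hlin : Tendsto (fun s : ℝ => c * s) (𝓝[>] 0) (𝓝 0) := by
      simpa using (tendsto_id.const_mul c).mono_left (nhdsWithin_le_nhds (a := (0 : ℝ)))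
    simpa using hpow.mul (hlim.sub hlin)
  intro t ht
  have hGt : G t ≤ 0 := by
    refine ge_of_tendsto hGlim ?_
    filter_upwards [Ioo_mem_nhdsGT ht.1] with s hs
    exact hanti ⟨hs.1, hs.2.trans ht.2⟩ ht hs.2.le
  have := nonpos_of_mul_nonpos_right hGt (Real.rpow_pos_of_pos ht.1 α)
  linarith

theorem eventually_div_lt_of_tendsto_deriv_add_mul_div (hα : 0 ≤ α)
    (hderiv : ∀ᶠ t in 𝓝[>] 0, HasDerivAt φ (φ' t) t)
    (hlim0 : Tendsto φ (𝓝[>] 0) (𝓝 0))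
    (hlim1 : Tendsto (fun t => φ' t + α * (φ t / t)) (𝓝[>] 0) (𝓝 0)) (hc : 0 < c) :
    ∀ᶠ t in 𝓝[>] 0, φ t / t < c := by
  have hsmall : ∀ᶠ t in 𝓝[>] 0, φ' t + α * (φ t / t) ≤ (α + 1) * (c / 2) :=
    hlim1.eventually (ge_mem_nhds (by positivity))
  obtain ⟨δ, hδ, hsub⟩ := mem_nhdsGT_iff_exists_Ioo_subset.1 (hderiv.and hsmall)
  have hle := le_mul_of_deriv_add_mul_div_le hα (fun t ht => (hsub ht).1)
    (fun t ht => (hsub ht).2) hlim0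
  filter_upwards [Ioo_mem_nhdsGT hδ] with t ht
  rw [div_lt_iff₀ ht.1]
  nlinarith [hle t ht, ht.1]

theorem tendsto_div_nhdsGT_zero_of_tendsto_deriv_add_mul_div (hα : 0 ≤ α)
    (hderiv : ∀ᶠ t in 𝓝[>] 0, HasDerivAt φ (φ' t) t)
    (hlim0 : Tendsto φ (𝓝[>] 0) (𝓝 0))
    (hlim1 : Tendsto (fun t => φ' t + α * (φ t / t)) (𝓝[>] 0) (𝓝 0)) :
    Tendsto (fun t => φ t / t) (𝓝[>] 0) (𝓝 0) := by
  refine tendsto_order.2 ⟨fun c hc => ?_, fun c hc =>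
    eventually_div_lt_of_tendsto_deriv_add_mul_div hα hderiv hlim0 hlim1 hc⟩
  have hneg := eventually_div_lt_of_tendsto_deriv_add_mul_div
    (φ := fun t => -φ t) (φ' := fun t => -φ' t) hα
    (hderiv.mono fun t ht => ht.neg) (by simpa using hlim0.neg)
    ((neg_zero (G := ℝ) ▸ hlim1.neg).congr fun t => by ring) (neg_pos.2 hc)
  filter_upwards [hneg] with t ht
  rw [neg_div] at ht
  linarith

theorem tendsto_div_nhdsLT_zero_of_tendsto_deriv_add_mul_div (hα : 0 ≤ α)
    (hderiv : ∀ᶠ t in 𝓝[<] 0, HasDerivAt φ (φ' t) t)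
    (hlim0 : Tendsto φ (𝓝[<] 0) (𝓝 0))
    (hlim1 : Tendsto (fun t => φ' t + α * (φ t / t)) (𝓝[<] 0) (𝓝 0)) :
    Tendsto (fun t => φ t / t) (𝓝[<] 0) (𝓝 0) := by
  have hflip : Tendsto Neg.neg (𝓝[>] (0 : ℝ)) (𝓝[<] 0) := by
    simpa using tendsto_neg_nhdsGT_neg (a := (0 : ℝ))
  have hderiv_flip : ∀ᶠ u in 𝓝[>] 0, HasDerivAt (fun u => φ (-u)) (-φ' (-u)) u := by
    filter_upwards [hflip.eventually hderiv] with u hu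
    have h := hu.comp u (hasDerivAt_neg' u)
    rwa [mul_neg_one] at h
  have hlim1_flip : Tendsto (fun u => -φ' (-u) + α * (φ (-u) / u)) (𝓝[>] 0) (𝓝 0) := by
    refine (neg_zero (G := ℝ) ▸ (hlim1.comp hflip).neg).congr fun u => ?_
    simp only [Function.comp, div_neg]
    ring
  have h := tendsto_div_nhdsGT_zero_of_tendsto_deriv_add_mul_div hα hderiv_flip
    (hlim0.comp hflip) hlim1_flip
  simpa [div_neg] using (h.comp (tendsto_neg_nhdsLT_neg (a := (0 : ℝ)))).neg

theorem tendsto_div_nhdsNE_zero_of_tendsto_deriv_add_mul_div (hα : 0 ≤ α)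
    (hderiv : ∀ᶠ t in 𝓝[≠] 0, HasDerivAt φ (φ' t) t)
    (hlim0 : Tendsto φ (𝓝[≠] 0) (𝓝 0))
    (hlim1 : Tendsto (fun t => φ' t + α * (φ t / t)) (𝓝[≠] 0) (𝓝 0)) :
    Tendsto (fun t => φ t / t) (𝓝[≠] 0) (𝓝 0) := by
  have hGT : 𝓝[>] (0 : ℝ) ≤ 𝓝[≠] 0 := nhdsWithin_mono 0 fun _ ht => ne_of_gt ht
  have hLT : 𝓝[<] (0 : ℝ) ≤ 𝓝[≠] 0 := nhdsWithin_mono 0 fun _ ht => ne_of_lt ht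
  rw [← nhdsLT_sup_nhdsGT, tendsto_sup]
  exact ⟨tendsto_div_nhdsLT_zero_of_tendsto_deriv_add_mul_div hα (hderiv.filter_mono hLT)
      (hlim0.mono_left hLT) (hlim1.mono_left hLT),
    tendsto_div_nhdsGT_zero_of_tendsto_deriv_add_mul_div hα (hderiv.filter_mono hGT)
      (hlim0.mono_left hGT) (hlim1.mono_left hGT)⟩

end TendstoDiv

theorem hasDerivAt_update_zero_of_tendsto_div {𝕜 : Type*} [NontriviallyNormedField 𝕜]
    [DecidableEq 𝕜] {f : 𝕜 → 𝕜} (h : Tendsto (fun t => f t / t) (𝓝[≠] 0) (𝓝 0)) :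
    HasDerivAt (Function.update f 0 0) 0 0 := by
  rw [hasDerivAt_iff_tendsto_slope_zero]
  refine h.congr' ?_
  filter_upwards [self_mem_nhdsWithin] with t ht
  rw [zero_add, Function.update_self, Function.update_of_ne ht, sub_zero, smul_eq_mul,
    div_eq_inv_mul]

/-- If `φ` is `C¹` on a punctured open interval around `0`, `φ(t) → 0` and
`φ'(t) + α·φ(t)/t → 0` as `t → 0`, then `φ(t)/t → 0` and `φ'(t) → 0`; consequently
the extension of `φ` by `0` at `0` is `C¹` on the whole interval with derivative `0` at `0`. -/
theorem stmt_1 (a b : ℝ) (ha : a < 0) (hb : 0 < b) (α : ℝ) (hα : 0 < α)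
    (φ φ' : ℝ → ℝ)
    (hderiv : ∀ t ∈ Ioo a b, t ≠ 0 → HasDerivAt φ (φ' t) t)
    (hcont : ContinuousOn φ' (Ioo a b \ {0}))
    (hlim0 : Tendsto φ (𝓝[≠] (0 : ℝ)) (𝓝 0))
    (hlim1 : Tendsto (fun t => φ' t + α * (φ t / t)) (𝓝[≠] (0 : ℝ)) (𝓝 0)) :
    Tendsto (fun t => φ t / t) (𝓝[≠] (0 : ℝ)) (𝓝 0) ∧
    Tendsto φ' (𝓝[≠] (0 : ℝ)) (𝓝 0) ∧
    ∃ ψ' : ℝ → ℝ,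
      (∀ t ∈ Ioo a b, HasDerivAt (Function.update φ 0 0) (ψ' t) t) ∧
      ContinuousOn ψ' (Ioo a b) ∧ ψ' 0 = 0 := by
  have hderiv' : ∀ᶠ t in 𝓝[≠] 0, HasDerivAt φ (φ' t) t := by
    filter_upwards [nhdsWithin_le_nhds (Ioo_mem_nhds ha hb), self_mem_nhdsWithin] with t ht ht0
    exact hderiv t ht ht0
  have hdiv := tendsto_div_nhdsNE_zero_of_tendsto_deriv_add_mul_div hα.le hderiv' hlim0 hlim1
  have hφ' : Tendsto φ' (𝓝[≠] 0) (𝓝 0) := by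
    simpa using hlim1.sub (hdiv.const_mul α)
  refine ⟨hdiv, hφ', Function.update φ' 0 0, fun t ht => ?_, ?_, Function.update_self ..⟩
  · rcases eq_or_ne t 0 with rfl | ht0
    · simpa using hasDerivAt_update_zero_of_tendsto_div hdiv
    · rw [Function.update_of_ne ht0]
      exact (hderiv t ht ht0).congr_of_eventuallyEq
        ((eventually_ne_nhds ht0).mono fun s hs => Function.update_of_ne hs _ _)
  · exact continuousOn_update_iff.2
      ⟨hcont, fun _ => hφ'.mono_left (nhdsWithin_mono 0 fun _ hs => hs.2)⟩
end

section
/- Let I ⊆ ℝ be an open interval containing 0 and let θ : I → ℝ be a C² function with θ(0) = 0 and θ'(0) = 0. Then, as t → 0, ∫₀ᵗ cos(θ(s)) ds = t − (θ''(0)²/40)·t⁵ + o(t⁵). -/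
/-!
By Taylor's theorem `θ s = θ''(0) s² / 2 + o(s²)`, so `θ s ^ 2 = θ''(0)² s⁴ / 4 + o(s⁴)`, while
`cos x = 1 - x² / 2 + O(x⁴)` and `θ s ^ 4 = O(s⁸)`. Hence `cos (θ s) = 1 - θ''(0)² s⁴ / 8 + o(s⁴)`,
and integrating an `o(s⁴)` remainder over `[0, t]` gives `o(t⁵)`.
-/

open Set Filter Topology Asymptotics

theorem Asymptotics.IsLittleO.intervalIntegral_pow_succ {E : Type*} [NormedAddCommGroup E]
    [NormedSpace ℝ E] {g : ℝ → E} {n : ℕ} (h : g =o[𝓝 0] fun s ↦ s ^ n) :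
    (fun t ↦ ∫ s in (0 : ℝ)..t, g s) =o[𝓝 0] fun t ↦ t ^ (n + 1) := by
  refine isLittleO_iff.2 fun ε hε ↦ ?_
  obtain ⟨δ, hδ, hg⟩ := Metric.eventually_nhds_iff.1 (isLittleO_iff.1 h hε)
  filter_upwards [Metric.ball_mem_nhds 0 hδ] with t ht
  have hg_le : ∀ s ∈ uIoc 0 t, ‖g s‖ ≤ ε * ‖t‖ ^ n := fun s hs ↦ by
    have hst : ‖s‖ ≤ ‖t‖ := by
      simpa [dist_comm] using Real.dist_left_le_of_mem_uIcc (uIoc_subset_uIcc hs)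
    calc ‖g s‖ ≤ ε * ‖s ^ n‖ := hg (by simpa using hst.trans_lt (mem_ball_zero_iff.1 ht))
      _ ≤ ε * ‖t‖ ^ n := by rw [norm_pow]; gcongr
  calc ‖∫ s in (0 : ℝ)..t, g s‖ ≤ ε * ‖t‖ ^ n * |t - 0| :=
        intervalIntegral.norm_integral_le_of_norm_le_const hg_le
    _ = ε * ‖t ^ (n + 1)‖ := by
        rw [sub_zero, ← Real.norm_eq_abs, norm_pow, pow_succ, mul_assoc]

theorem Convex.isLittleO_sub_taylor_two {E : Type*} [NormedAddCommGroup E] [NormedSpace ℝ E]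
    {f : ℝ → E} {s : Set ℝ} {x₀ : ℝ} (hs : Convex ℝ s) (hs₀ : s ∈ 𝓝 x₀)
    (hf : ContDiffOn ℝ 2 f s) :
    (fun x ↦ f x - (f x₀ + (x - x₀) • deriv f x₀ + ((x - x₀) ^ 2 / 2) • deriv (deriv f) x₀))
      =o[𝓝 x₀] fun x ↦ (x - x₀) ^ 2 := by
  have hx₀ : x₀ ∈ s := mem_of_mem_nhds hs₀
  have hunique : UniqueDiffOn ℝ s :=
    uniqueDiffOn_convex hs ⟨x₀, mem_interior_iff_mem_nhds.2 hs₀⟩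
  have hderiv (k : ℕ) (hk : k ≤ 2) : iteratedDerivWithin k f s x₀ = iteratedDeriv k f x₀ :=
    iteratedDerivWithin_eq_iteratedDeriv hunique
      ((hf.of_le (by exact_mod_cast hk)).contDiffAt hs₀) hx₀
  have htaylor := taylor_isLittleO hs hx₀ hf
  rw [nhdsWithin_eq_nhds.2 hs₀] at htaylor
  convert htaylor using 3 with x
  norm_num [taylorWithinEval_succ, hderiv, iteratedDeriv_succ, div_eq_inv_mul]

theorem Real.cos_sub_one_sub_sq_div_two_isBigO :
    (fun x ↦ Real.cos x - (1 - x ^ 2 / 2)) =O[𝓝 0] fun x ↦ x ^ 4 := by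
  refine isBigO_iff.2 ⟨5 / 96, ?_⟩
  filter_upwards [Metric.closedBall_mem_nhds (0 : ℝ) one_pos] with x hx
  rw [Real.norm_eq_abs, norm_pow, Real.norm_eq_abs, mul_comm]
  exact Real.cos_bound (by simpa using hx)

theorem Asymptotics.IsLittleO.sq_sub_sq {α R : Type*} [NormedCommRing R] {l : Filter α}
    {f g : α → R} {h : α → ℝ} (hfg : (fun x ↦ f x - g x) =o[l] h) (hg : g =O[l] h) :
    (fun x ↦ f x ^ 2 - g x ^ 2) =o[l] fun x ↦ h x ^ 2 := by
  have hsum : (fun x ↦ f x + g x) =O[l] h :=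
    (hfg.isBigO.add (hg.const_mul_left 2)).congr_left fun x ↦ by ring
  exact (hfg.mul_isBigO hsum).congr (fun x ↦ by ring) fun x ↦ by ring

theorem Real.isLittleO_cos_comp_of_isLittleO_sub_sq {θ : ℝ → ℝ} {c : ℝ}
    (hθ : (fun s ↦ θ s - c / 2 * s ^ 2) =o[𝓝 0] fun s ↦ s ^ 2) :
    (fun s ↦ Real.cos (θ s) - (1 - c ^ 2 / 8 * s ^ 4)) =o[𝓝 0] fun s ↦ s ^ 4 := by
  have hquad : (fun s ↦ c / 2 * s ^ 2) =O[𝓝 0] fun s ↦ s ^ 2 :=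
    (isBigO_refl _ _).const_mul_left _
  have hθ_bigO : θ =O[𝓝 0] fun s ↦ s ^ 2 :=
    (hθ.isBigO.add hquad).congr_left fun s ↦ by ring
  have hθ_tendsto : Tendsto θ (𝓝 0) (𝓝 0) :=
    hθ_bigO.trans_tendsto (by simpa using (continuous_pow 2).tendsto (0 : ℝ))
  have hcos : (fun s ↦ Real.cos (θ s) - (1 - θ s ^ 2 / 2)) =o[𝓝 0] fun s ↦ s ^ 4 :=
    (Real.cos_sub_one_sub_sq_div_two_isBigO.comp_tendsto hθ_tendsto).trans_isLittleO
      ((hθ_bigO.pow 4).trans_isLittleO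
        ((isLittleO_pow_pow (by norm_num : 4 < 8)).congr_left fun s ↦ by ring))
  have hsq : (fun s ↦ θ s ^ 2 - (c / 2 * s ^ 2) ^ 2) =o[𝓝 0] fun s ↦ s ^ 4 :=
    (hθ.sq_sub_sq hquad).congr_right fun s ↦ by ring
  exact (hcos.sub (hsq.const_mul_left (1 / 2))).congr_left fun s ↦ by ring

/-- If `θ` is `C²` on an open interval around `0` with `θ(0) = 0` and `θ'(0) = 0`,
then `∫₀ᵗ cos(θ(s)) ds = t - (θ''(0)²/40)·t⁵ + o(t⁵)` as `t → 0`. -/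
theorem stmt_4 (a b : ℝ) (ha : a < 0) (hb : 0 < b) (θ : ℝ → ℝ)
    (hθ : ContDiffOn ℝ 2 θ (Ioo a b)) (h0 : θ 0 = 0) (h1 : deriv θ 0 = 0) :
    (fun t : ℝ => (∫ s in (0:ℝ)..t, Real.cos (θ s)) -
        (t - (deriv (deriv θ) 0) ^ 2 / 40 * t ^ 5)) =o[𝓝 0] (fun t : ℝ => t ^ 5) := by
  set c := deriv (deriv θ) 0
  have hnhds : Ioo a b ∈ 𝓝 (0 : ℝ) := Ioo_mem_nhds ha hb
  have hθ_taylor : (fun s ↦ θ s - c / 2 * s ^ 2) =o[𝓝 0] fun s ↦ s ^ 2 := by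
    refine ((convex_Ioo a b).isLittleO_sub_taylor_two hnhds hθ).congr (fun s ↦ ?_) fun s ↦ ?_
    · simp only [h0, h1, sub_zero, smul_eq_mul, zero_add]
      ring
    · rw [sub_zero]
  refine (Real.isLittleO_cos_comp_of_isLittleO_sub_sq hθ_taylor).intervalIntegral_pow_succ.congr'
    ?_ EventuallyEq.rfl
  filter_upwards [hnhds] with t ht
  have hcos_int : IntervalIntegrable (fun s ↦ Real.cos (θ s)) MeasureTheory.volume 0 t :=
    ((Real.continuous_cos.comp_continuousOn hθ.continuousOn).mono
      (ordConnected_Ioo.uIcc_subset ⟨ha, hb⟩ ht)).intervalIntegrable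
  rw [intervalIntegral.integral_sub hcos_int (Continuous.intervalIntegrable (by fun_prop) _ _),
    intervalIntegral.integral_sub intervalIntegrable_const
      (Continuous.intervalIntegrable (by fun_prop) _ _),
    intervalIntegral.integral_const, intervalIntegral.integral_const_mul, integral_pow,
    smul_eq_mul]
  ring
end

section
/- Let T > 0. Let θ : (0,T] → ℝ be a C¹ function, c : (0,T] → ℝ a continuous function, and m : (0,T] → ℝ a bounded function, such that θ'(t) = m(t) + sin(θ(t))·c(t) for every t ∈ (0,T]. Define δ(t) = ∫₀ᵗ cos(θ(s)) ds and M(t) = sup_{0 < s ≤ t} |m(s)|. Assume that δ(t) > 0 and δ(t)·c(t) < −3 for every t ∈ (0,T]. Then for every t ∈ (0,T] one has |sin(θ(t))| ≤ t·M(t)/3. -/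
/-!
Write `δ t = ∫₀ᵗ cos θ`, so that `δ' = cos θ` and `|δ t| ≤ t`. Every estimate comes from one
barrier principle: a function on `(0, b]` that takes arbitrarily small values near `0` and cannot
increase while it is positive is `≤ 0` at `b`.

First, `t - δ cos θ - M t² / 2` has derivative `sin² θ (1 + δ c) + δ m sin θ - M t ≤ 0`, so
`δ cos θ ≥ t - M t² / 2` and `cos θ > 0` near `0`. Next, as long as `cos θ ≥ 0`, the derivative of
`δ sin θ - M δ² / 4` is `cos θ (sin θ (1 + δ c) + δ (m - M / 2))`, which is `≤ 0` wherever the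
function is positive because `δ c < -3`; hence `|sin θ| ≤ M t / 4`. When `M t < 4` this bound
keeps `cos θ` from vanishing, since `|sin θ| = 1` at a first zero of `cos θ`; when `M t ≥ 3` the
claim is trivial.
-/

open Set Filter Topology

open Real MeasureTheory intervalIntegral

theorem nonpos_of_deriv_nonpos_of_pos {f f' : ℝ → ℝ} {a b : ℝ}
    (hf : ContinuousOn f (Ioc a b)) (hderiv : ∀ x ∈ Ioo a b, HasDerivAt f (f' x) x)
    (hdecr : ∀ x ∈ Ioo a b, 0 < f x → f' x ≤ 0)
    (hsmall : ∀ ε > 0, ∃ x ∈ Ioo a b, f x ≤ ε) : f b ≤ 0 := by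
  -- Fence `f` from above by the line `ε (1 + (x - s))` started at a point `s` where `f s ≤ ε`.
  have hfence : ∀ ε > 0, f b ≤ ε * (1 + (b - a)) := by
    intro ε hε
    obtain ⟨s, hs, hfs⟩ := hsmall ε hε
    have hline : ∀ x, HasDerivAt (fun x => ε * (1 + (x - s))) ε x := fun x => by
      simpa using (((hasDerivAt_id x).sub_const s).const_add 1).const_mul ε
    have hfb := image_le_of_deriv_right_lt_deriv_boundary
      (hf.mono (Icc_subset_Ioc hs.1 le_rfl))
      (fun x hx => (hderiv x ⟨hs.1.trans_le hx.1, hx.2⟩).hasDerivWithinAt)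
      (by simpa using hfs) hline
      (fun x hx hfx => (hdecr x ⟨hs.1.trans_le hx.1, hx.2⟩ (by nlinarith [hx.1])).trans_lt hε)
      ⟨hs.2.le, le_rfl⟩
    exact hfb.trans (by nlinarith [hs.1])
  by_contra! hpos
  have hab : 0 < 1 + (b - a) := by
    obtain ⟨x, hx, -⟩ := hsmall 1 one_pos
    linarith [hx.1, hx.2]
  have := hfence (f b / (2 * (1 + (b - a)))) (by positivity)
  rw [div_mul_eq_mul_div, mul_div_mul_right _ _ hab.ne'] at this
  linarith

section Primitive

variable {g : ℝ → ℝ} {a b C : ℝ}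

theorem integrableOn_Ioc_of_continuousOn_of_abs_le (hg : ContinuousOn g (Ioc a b))
    (hC : ∀ x ∈ Ioc a b, |g x| ≤ C) : IntegrableOn g (Ioc a b) :=
  IntegrableOn.of_bound measure_Ioc_lt_top (hg.aestronglyMeasurable measurableSet_Ioc) C
    ((ae_restrict_iff' measurableSet_Ioc).2 (ae_of_all _ hC))

theorem continuousOn_primitive_of_continuousOn_Ioc (hg : ContinuousOn g (Ioc a b))
    (hC : ∀ x ∈ Ioc a b, |g x| ≤ C) (hab : a ≤ b) :
    ContinuousOn (fun x => ∫ t in a..x, g t) (Icc a b) := by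
  rw [← uIcc_of_le hab]
  refine continuousOn_primitive_interval ?_
  rw [uIcc_of_le hab, integrableOn_Icc_iff_integrableOn_Ioc]
  exact integrableOn_Ioc_of_continuousOn_of_abs_le hg hC

theorem hasDerivAt_primitive_of_continuousOn_Ioc (hg : ContinuousOn g (Ioc a b))
    (hC : ∀ x ∈ Ioc a b, |g x| ≤ C) {x : ℝ} (hx : x ∈ Ioo a b) :
    HasDerivAt (fun u => ∫ t in a..u, g t) (g x) x := by
  have hgx : ContinuousOn g (Ioc a x) := hg.mono (Ioc_subset_Ioc_right hx.2.le)
  refine integral_hasDerivAt_right ?_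
    ((hg.mono Ioo_subset_Ioc_self).stronglyMeasurableAtFilter isOpen_Ioo x hx)
    (hg.continuousAt (Ioc_mem_nhds hx.1 hx.2))
  exact (intervalIntegrable_iff_integrableOn_Ioc_of_le hx.1.le).2
    (integrableOn_Ioc_of_continuousOn_of_abs_le hgx fun y hy => hC y ⟨hy.1, hy.2.trans hx.2.le⟩)

end Primitive

theorem abs_integral_cos_comp_le (θ : ℝ → ℝ) {t : ℝ} (ht : 0 ≤ t) :
    |∫ s in (0:ℝ)..t, cos (θ s)| ≤ t := by
  simpa [abs_of_nonneg ht] using norm_integral_le_of_norm_le_const (a := 0) (b := t)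
    (C := 1) (f := fun s => cos (θ s)) fun s _ => by simpa using abs_cos_le_one (θ s)

theorem sub_le_integral_cos_mul_cos {θ c m : ℝ → ℝ} {b M : ℝ}
    (hode : ∀ t ∈ Ioc (0:ℝ) b, HasDerivAt θ (m t + sin (θ t) * c t) t)
    (hδpos : ∀ t ∈ Ioc (0:ℝ) b, 0 < ∫ s in (0:ℝ)..t, cos (θ s))
    (hδc : ∀ t ∈ Ioc (0:ℝ) b, (∫ s in (0:ℝ)..t, cos (θ s)) * c t < -3)
    (hM : ∀ t ∈ Ioc (0:ℝ) b, |m t| ≤ M) :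
    ∀ t ∈ Ioc (0:ℝ) b, t - M * t ^ 2 / 2 ≤ (∫ s in (0:ℝ)..t, cos (θ s)) * cos (θ t) := by
  intro t ht
  have ht0 : 0 < t := ht.1
  set δ := fun x => ∫ s in (0:ℝ)..x, cos (θ s)
  have hM0 : 0 ≤ M := (abs_nonneg _).trans (hM t ht)
  have hcos : ContinuousOn (fun x => cos (θ x)) (Ioc 0 t) := fun x hx =>
    (hode x ⟨hx.1, hx.2.trans ht.2⟩).cos.continuousAt.continuousWithinAt
  have hδcont : ContinuousOn δ (Ioc 0 t) :=
    (continuousOn_primitive_of_continuousOn_Ioc hcos (fun x _ => abs_cos_le_one (θ x))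
      ht.1.le).mono Ioc_subset_Icc_self
  suffices t - δ t * cos (θ t) - M / 2 * t ^ 2 ≤ 0 by linarith
  refine nonpos_of_deriv_nonpos_of_pos (a := 0)
    (f := fun x => x - δ x * cos (θ x) - M / 2 * x ^ 2)
    (f' := fun x => sin (θ x) ^ 2 * (1 + δ x * c x) + δ x * (sin (θ x) * m x) - M * x)
    ((continuousOn_id.sub (hδcont.mul hcos)).sub (by fun_prop)) (fun x hx => ?_)
    (fun x hx _ => ?_) (fun ε hε => ?_)
  · have hxb : x ∈ Ioc 0 b := ⟨hx.1, hx.2.le.trans ht.2⟩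
    have hδx := hasDerivAt_primitive_of_continuousOn_Ioc hcos (fun x _ => abs_cos_le_one (θ x)) hx
    refine (((hasDerivAt_id x).sub (hδx.mul (hode x hxb).cos)).sub
      ((hasDerivAt_pow 2 x).const_mul (M / 2))).congr_deriv ?_
    norm_num
    linear_combination -sin_sq_add_cos_sq (θ x)
  · have hxb : x ∈ Ioc 0 b := ⟨hx.1, hx.2.le.trans ht.2⟩
    have hδx : 0 < δ x := hδpos x hxb
    have hδle : δ x ≤ x := (le_abs_self _).trans (abs_integral_cos_comp_le θ hx.1.le)
    have hsm : sin (θ x) * m x ≤ M := by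
      calc sin (θ x) * m x ≤ |sin (θ x)| * |m x| := by rw [← abs_mul]; exact le_abs_self _
        _ ≤ M := (mul_le_of_le_one_left (abs_nonneg _) (abs_sin_le_one _)).trans (hM x hxb)
    nlinarith [hδc x hxb, sq_nonneg (sin (θ x))]
  · refine ⟨min (t / 2) (ε / 2), ⟨by positivity, by linarith [min_le_left (t / 2) (ε / 2)]⟩, ?_⟩
    set x := min (t / 2) (ε / 2)
    have hδle := abs_integral_cos_comp_le θ (show 0 ≤ x by positivity)
    have : -(δ x * cos (θ x)) ≤ |δ x| := (neg_le_abs _).trans <| by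
      rw [abs_mul]; exact mul_le_of_le_one_right (abs_nonneg _) (abs_cos_le_one _)
    nlinarith [min_le_right (t / 2) (ε / 2)]

theorem sin_le_of_cos_nonneg {θ c m : ℝ → ℝ} {b M : ℝ} (hb : 0 < b)
    (hode : ∀ t ∈ Ioc (0:ℝ) b, HasDerivAt θ (m t + sin (θ t) * c t) t)
    (hδpos : ∀ t ∈ Ioc (0:ℝ) b, 0 < ∫ s in (0:ℝ)..t, cos (θ s))
    (hδc : ∀ t ∈ Ioc (0:ℝ) b, (∫ s in (0:ℝ)..t, cos (θ s)) * c t < -3)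
    (hM0 : 0 ≤ M) (hM : ∀ t ∈ Ioc (0:ℝ) b, m t ≤ M)
    (hcos : ∀ t ∈ Ioo (0:ℝ) b, 0 ≤ cos (θ t)) :
    sin (θ b) ≤ M * b / 4 := by
  set δ := fun x => ∫ s in (0:ℝ)..x, cos (θ s)
  have hcosc : ContinuousOn (fun x => cos (θ x)) (Ioc 0 b) := fun x hx =>
    (hode x hx).cos.continuousAt.continuousWithinAt
  have hδcont : ContinuousOn δ (Ioc 0 b) :=
    (continuousOn_primitive_of_continuousOn_Ioc hcosc (fun x _ => abs_cos_le_one (θ x))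
      hb.le).mono Ioc_subset_Icc_self
  have hδb : 0 < δ b := hδpos b ⟨hb, le_rfl⟩
  have hδle : δ b ≤ b := (le_abs_self _).trans (abs_integral_cos_comp_le θ hb.le)
  suffices h : δ b * sin (θ b) - M / 4 * δ b ^ 2 ≤ 0 by
    calc sin (θ b) ≤ M / 4 * δ b := le_of_mul_le_mul_left (by linarith) hδb
      _ ≤ M * b / 4 := by nlinarith
  have hsinc : ContinuousOn (fun x => sin (θ x)) (Ioc 0 b) := fun x hx =>
    (hode x hx).sin.continuousAt.continuousWithinAt
  refine nonpos_of_deriv_nonpos_of_pos (a := 0)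
    (f := fun x => δ x * sin (θ x) - M / 4 * δ x ^ 2)
    (f' := fun x => cos (θ x) * (sin (θ x) * (1 + δ x * c x) + δ x * (m x - M / 2)))
    ((hδcont.mul hsinc).sub ((hδcont.pow 2).const_smul (M / 4))) (fun x hx => ?_)
    (fun x hx hfx => ?_) (fun ε hε => ?_)
  · have hδx := hasDerivAt_primitive_of_continuousOn_Ioc hcosc
      (fun x _ => abs_cos_le_one (θ x)) hx
    refine ((hδx.mul (hode x ⟨hx.1, hx.2.le⟩).sin).sub
      ((hδx.pow 2).const_mul (M / 4))).congr_deriv ?_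
    norm_num [δ]
    ring
  · have hxb : x ∈ Ioc 0 b := ⟨hx.1, hx.2.le⟩
    have hδx : 0 < δ x := hδpos x hxb
    have hsin : M * δ x / 4 < sin (θ x) := by nlinarith
    have hδcx := hδc x hxb
    have hm := hM x hxb
    refine mul_nonpos_of_nonneg_of_nonpos (hcos x hx) ?_
    nlinarith [mul_nonneg hM0 hδx.le]
  · refine ⟨min (b / 2) (ε / 2), ⟨by positivity, by linarith [min_le_left (b / 2) (ε / 2)]⟩, ?_⟩
    set x := min (b / 2) (ε / 2)
    have hδle := abs_integral_cos_comp_le θ (show 0 ≤ x by positivity)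
    have : δ x * sin (θ x) ≤ |δ x| := (le_abs_self _).trans <| by
      rw [abs_mul]; exact mul_le_of_le_one_right (abs_nonneg _) (abs_sin_le_one _)
    nlinarith [min_le_right (b / 2) (ε / 2), sq_nonneg (δ x)]

theorem abs_sin_le_of_cos_nonneg {θ c m : ℝ → ℝ} {b M : ℝ} (hb : 0 < b)
    (hode : ∀ t ∈ Ioc (0:ℝ) b, HasDerivAt θ (m t + sin (θ t) * c t) t)
    (hδpos : ∀ t ∈ Ioc (0:ℝ) b, 0 < ∫ s in (0:ℝ)..t, cos (θ s))
    (hδc : ∀ t ∈ Ioc (0:ℝ) b, (∫ s in (0:ℝ)..t, cos (θ s)) * c t < -3)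
    (hM : ∀ t ∈ Ioc (0:ℝ) b, |m t| ≤ M)
    (hcos : ∀ t ∈ Ioo (0:ℝ) b, 0 ≤ cos (θ t)) :
    |sin (θ b)| ≤ M * b / 4 := by
  have hM0 : 0 ≤ M := (abs_nonneg _).trans (hM b ⟨hb, le_rfl⟩)
  refine abs_le.2 ⟨?_, sin_le_of_cos_nonneg hb hode hδpos hδc hM0
    (fun t ht => (le_abs_self _).trans (hM t ht)) hcos⟩
  -- The equation is invariant under `(θ, m) ↦ (-θ, -m)`, which leaves `δ` unchanged.
  have := sin_le_of_cos_nonneg (θ := fun t => -θ t) (c := c) (m := fun t => -m t) hb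
    (fun t ht => (hode t ht).neg.congr_deriv (by rw [sin_neg]; ring))
    (by simpa only [cos_neg] using hδpos) (by simpa only [cos_neg] using hδc) hM0
    (fun t ht => (neg_le_abs _).trans (hM t ht)) (by simpa only [cos_neg] using hcos)
  rw [sin_neg] at this
  linarith

theorem cos_nonneg_of_mul_lt_four {θ c m : ℝ → ℝ} {b M : ℝ}
    (hode : ∀ t ∈ Ioc (0:ℝ) b, HasDerivAt θ (m t + sin (θ t) * c t) t)
    (hδpos : ∀ t ∈ Ioc (0:ℝ) b, 0 < ∫ s in (0:ℝ)..t, cos (θ s))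
    (hδc : ∀ t ∈ Ioc (0:ℝ) b, (∫ s in (0:ℝ)..t, cos (θ s)) * c t < -3)
    (hM : ∀ t ∈ Ioc (0:ℝ) b, |m t| ≤ M) (hMb : M * b < 4) :
    ∀ t ∈ Ioc (0:ℝ) b, 0 ≤ cos (θ t) := by
  by_contra! hneg
  obtain ⟨s, hs, hcs⟩ := hneg
  have hM0 : 0 ≤ M := (abs_nonneg _).trans (hM s hs)
  have hcos_pos : ∀ t ∈ Ioc (0:ℝ) b, M * t < 2 → 0 < cos (θ t) := fun t ht hMt =>
    pos_of_mul_pos_right ((by nlinarith [ht.1] : 0 < t - M * t ^ 2 / 2).trans_le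
      (sub_le_integral_cos_mul_cos hode hδpos hδc hM t ht)) (hδpos t ht).le
  set ε := min s (1 / (M + 1))
  have hε : 0 < ε := lt_min hs.1 (by positivity)
  have hεs : ε ≤ s := min_le_left _ _
  have hMε : M * ε < 2 := by
    have : M * ε ≤ M * (1 / (M + 1)) := mul_le_mul_of_nonneg_left (min_le_right _ _) hM0
    have : M * (1 / (M + 1)) < 1 := by rw [mul_one_div, div_lt_one (by linarith)]; linarith
    linarith
  -- the first point of `[ε, s]` where `cos θ ≤ 0`
  have hcont : ContinuousOn (fun t => cos (θ t)) (Icc ε s) := fun t ht =>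
    (hode t ⟨hε.trans_le ht.1, ht.2.trans hs.2⟩).cos.continuousAt.continuousWithinAt
  obtain ⟨t₀, ⟨ht₀, hct₀⟩, hleast⟩ := (isCompact_Icc.of_isClosed_subset
    (hcont.preimage_isClosed_of_isClosed isClosed_Icc isClosed_Iic) inter_subset_left).exists_isLeast
    ⟨s, ⟨hεs, le_rfl⟩, hcs.le⟩
  have ht₀b : t₀ ∈ Ioc 0 b := ⟨hε.trans_le ht₀.1, ht₀.2.trans hs.2⟩
  have hbefore : ∀ t ∈ Ioo 0 t₀, 0 < cos (θ t) := by
    intro t ht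
    rcases le_or_gt t ε with htε | htε
    · exact hcos_pos t ⟨ht.1, ht.2.le.trans ht₀b.2⟩
        (lt_of_le_of_lt (mul_le_mul_of_nonneg_left htε hM0) hMε)
    · by_contra! hct
      exact (hleast ⟨⟨htε.le, ht.2.le.trans ht₀.2⟩, hct⟩).not_gt ht.2
  have hzero : cos (θ t₀) = 0 := by
    refine le_antisymm hct₀ (ge_of_tendsto ((hode t₀ ht₀b).cos.continuousAt.tendsto.mono_left
      (nhdsWithin_le_nhds (s := Iio t₀))) ?_)
    filter_upwards [Ioo_mem_nhdsLT ht₀b.1] with t ht using (hbefore t ht).le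
  have hsin := abs_sin_le_of_cos_nonneg ht₀b.1
    (fun t ht => hode t ⟨ht.1, ht.2.trans ht₀b.2⟩)
    (fun t ht => hδpos t ⟨ht.1, ht.2.trans ht₀b.2⟩)
    (fun t ht => hδc t ⟨ht.1, ht.2.trans ht₀b.2⟩)
    (fun t ht => hM t ⟨ht.1, ht.2.trans ht₀b.2⟩) (fun t ht => (hbefore t ht).le)
  have hsin1 : |sin (θ t₀)| < 1 := hsin.trans_lt (by nlinarith [ht₀b.2])
  nlinarith [sin_sq_add_cos_sq (θ t₀), sq_abs (sin (θ t₀)), abs_nonneg (sin (θ t₀))]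

theorem stmt_7_general (T : ℝ) (θ c m : ℝ → ℝ)
    (hode : ∀ t ∈ Ioc (0 : ℝ) T, HasDerivAt θ (m t + Real.sin (θ t) * c t) t)
    (hm_bdd : ∃ C : ℝ, ∀ t ∈ Ioc (0 : ℝ) T, |m t| ≤ C)
    (hδpos : ∀ t ∈ Ioc (0 : ℝ) T, 0 < ∫ s in (0:ℝ)..t, Real.cos (θ s))
    (hδc : ∀ t ∈ Ioc (0 : ℝ) T, (∫ s in (0:ℝ)..t, Real.cos (θ s)) * c t < -3) :
    ∀ t ∈ Ioc (0 : ℝ) T,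
      |Real.sin (θ t)| ≤ t * sSup ((fun s => |m s|) '' Ioc (0 : ℝ) t) / 3 := by
  intro t ht
  set M := sSup ((fun s => |m s|) '' Ioc (0 : ℝ) t)
  have hsub : Ioc (0:ℝ) t ⊆ Ioc 0 T := Ioc_subset_Ioc_right ht.2
  obtain ⟨C, hC⟩ := hm_bdd
  have hM : ∀ s ∈ Ioc (0:ℝ) t, |m s| ≤ M := fun s hs =>
    le_csSup ⟨C, by rintro _ ⟨u, hu, rfl⟩; exact hC u (hsub hu)⟩ ⟨s, hs, rfl⟩
  have hM0 : 0 ≤ M := (abs_nonneg _).trans (hM t ⟨ht.1, le_rfl⟩)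
  rcases le_or_gt 3 (M * t) with hbig | hMt
  · exact (abs_sin_le_one _).trans (by linarith)
  have hode' := fun s hs => hode s (hsub hs)
  have hδpos' := fun s hs => hδpos s (hsub hs)
  have hδc' := fun s hs => hδc s (hsub hs)
  have hcos := cos_nonneg_of_mul_lt_four hode' hδpos' hδc' hM (by linarith)
  have := abs_sin_le_of_cos_nonneg ht.1 hode' hδpos' hδc' hM fun s hs => hcos s ⟨hs.1, hs.2.le⟩
  nlinarith [ht.1]

/-- Let `θ` be `C¹` on `(0,T]` satisfying `θ'(t) = m(t) + sin(θ(t))·c(t)` with `c`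
continuous and `m` bounded. If `δ(t) = ∫₀ᵗ cos(θ(s)) ds` satisfies `δ(t) > 0` and
`δ(t)·c(t) < -3` on `(0,T]`, then `|sin(θ(t))| ≤ t·M(t)/3` where
`M(t) = sup_{0 < s ≤ t} |m(s)|`. -/
theorem stmt_7 (T : ℝ) (hT : 0 < T) (θ c m : ℝ → ℝ)
    (hode : ∀ t ∈ Ioc (0 : ℝ) T, HasDerivAt θ (m t + Real.sin (θ t) * c t) t)
    (hc : ContinuousOn c (Ioc (0 : ℝ) T))
    (hderiv_cont : ContinuousOn (fun t => m t + Real.sin (θ t) * c t) (Ioc (0 : ℝ) T))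
    (hm_bdd : ∃ C : ℝ, ∀ t ∈ Ioc (0 : ℝ) T, |m t| ≤ C)
    (hδpos : ∀ t ∈ Ioc (0 : ℝ) T, 0 < ∫ s in (0:ℝ)..t, Real.cos (θ s))
    (hδc : ∀ t ∈ Ioc (0 : ℝ) T, (∫ s in (0:ℝ)..t, Real.cos (θ s)) * c t < -3) :
    ∀ t ∈ Ioc (0 : ℝ) T,
      |Real.sin (θ t)| ≤ t * sSup ((fun s => |m s|) '' Ioc (0 : ℝ) t) / 3 :=
  stmt_7_general T θ c m hode hm_bdd hδpos hδc
end

section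
/- Let ε > 0, and let a, b : (0,ε) → ℝ be smooth functions. Suppose σ₁, σ₂ : [0,ε) → ℝ are smooth functions that both solve the linear differential equation σ''(t) + a(t)·σ'(t) + b(t)·σ(t) = 0 on (0,ε), and whose derivatives at 0 satisfy: σ₁(0) = σ₁'(0) = 0, σ₁''(0) = 1, and σ₂(0) = σ₂'(0) = σ₂''(0) = 0, σ₂'''(0) = −1. Then t·a(t) → −4 and t²·b(t) → 6 as t → 0⁺. -/
open Set Filter Topology

lemma key_aux (ε : ℝ) (hε : 0 < ε) :
    ∀ (n : ℕ) (f : ℝ → ℝ), ContDiffOn ℝ (⊤ : ℕ∞) f (Ico 0 ε) →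
    (∀ k < n, iteratedDerivWithin k f (Ico 0 ε) 0 = 0) →
    Tendsto (fun t => f t / t ^ n) (𝓝[>] (0:ℝ))
      (𝓝 (iteratedDerivWithin n f (Ico 0 ε) 0 / n.factorial)) := by
  have hmem0 : (0:ℝ) ∈ Ico 0 ε := ⟨le_refl _, hε⟩
  have hUD : UniqueDiffOn ℝ (Ico (0:ℝ) ε) := uniqueDiffOn_Ico 0 ε
  have hle : 𝓝[>] (0:ℝ) ≤ 𝓝[Ico 0 ε] 0 := by
    rw [← nhdsWithin_Ioo_eq_nhdsGT hε]
    exact nhdsWithin_mono _ Ioo_subset_Ico_self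
  intro n
  induction n with
  | zero =>
    intro f hf _
    simp only [pow_zero, div_one, iteratedDerivWithin_zero, Nat.factorial_zero, Nat.cast_one]
    exact (hf.continuousOn 0 hmem0).tendsto.mono_left hle
  | succ n IH =>
    intro f hf h0
    have hIoo : Ioo (0:ℝ) ε ∈ 𝓝[>] (0:ℝ) := Ioo_mem_nhdsGT_of_mem ⟨le_refl _, hε⟩
    set F := derivWithin f (Ico 0 ε) with hF
    have hFc : ContDiffOn ℝ (⊤ : ℕ∞) F (Ico 0 ε) := hf.derivWithin hUD (by simp)
    have hjet : ∀ k, iteratedDerivWithin k F (Ico 0 ε) 0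
        = iteratedDerivWithin (k+1) f (Ico 0 ε) 0 := fun k =>
      (congrFun iteratedDerivWithin_succ' 0).symm
    have hIH : Tendsto (fun t => F t / t ^ n) (𝓝[>] (0:ℝ))
        (𝓝 (iteratedDerivWithin (n+1) f (Ico 0 ε) 0 / n.factorial)) := by
      have := IH F hFc (fun k hk => by rw [hjet k]; exact h0 (k+1) (by omega))
      rwa [hjet n] at this
    apply deriv.lhopital_zero_nhdsGT
    · filter_upwards [hIoo] with x hx
      exact ((hf.differentiableOn (by simp)) x (Ioo_subset_Ico_self hx)).differentiableAt
        (mem_of_superset (Ioo_mem_nhds hx.1 hx.2) Ioo_subset_Ico_self)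
    · filter_upwards [hIoo] with x hx
      have : deriv (fun t : ℝ => t ^ (n+1)) x = (n+1 : ℝ) * x ^ n := by
        simp [deriv_pow]
      rw [this]
      have hx0 : (0:ℝ) < x := hx.1
      positivity
    · have : Tendsto f (𝓝[>] (0:ℝ)) (𝓝 (f 0)) :=
        (hf.continuousOn 0 hmem0).tendsto.mono_left hle
      have h00 := h0 0 (by omega)
      rw [iteratedDerivWithin_zero] at h00
      rwa [h00] at this
    · have : Tendsto (fun t : ℝ => t ^ (n+1)) (𝓝[>] (0:ℝ)) (𝓝 (0 ^ (n+1) : ℝ)) :=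
        (continuous_pow (n+1)).continuousAt.tendsto.mono_left nhdsWithin_le_nhds
      simpa using this
    · have hcongr : ∀ᶠ x in 𝓝[>] (0:ℝ),
          F x / ((n+1:ℝ) * x ^ n) = deriv f x / deriv (fun t : ℝ => t ^ (n+1)) x := by
        filter_upwards [hIoo] with x hx
        have h1 : derivWithin f (Ico 0 ε) x = deriv f x :=
          derivWithin_of_mem_nhds (mem_of_superset (Ioo_mem_nhds hx.1 hx.2) Ioo_subset_Ico_self)
        have h2 : deriv (fun t : ℝ => t ^ (n+1)) x = (n+1:ℝ) * x ^ n := by simp [deriv_pow]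
        rw [h2, ← h1]
      apply Tendsto.congr' hcongr
      have : Tendsto (fun x => (F x / x ^ n) / (n+1:ℝ)) (𝓝[>] (0:ℝ))
          (𝓝 (iteratedDerivWithin (n+1) f (Ico 0 ε) 0 / n.factorial / (n+1:ℝ))) :=
        hIH.div_const _
      have heq : (iteratedDerivWithin (n+1) f (Ico 0 ε) 0 / n.factorial / (n+1:ℝ))
          = iteratedDerivWithin (n+1) f (Ico 0 ε) 0 / (n+1).factorial := by
        rw [div_div]
        congr 1
        rw [Nat.factorial_succ]
        push_cast
        ring
      rw [heq] at this
      apply this.congr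
      intro x
      rw [div_div, mul_comm]

/-- If `σ₁, σ₂` are smooth on `[0,ε)`, solve `σ'' + a·σ' + b·σ = 0` on `(0,ε)`
(with `a`, `b` smooth on `(0,ε)`), and have jets at `0` given by
`σ₁(0) = σ₁'(0) = 0, σ₁''(0) = 1` and `σ₂(0) = σ₂'(0) = σ₂''(0) = 0, σ₂'''(0) = -1`,
then `t·a(t) → -4` and `t²·b(t) → 6` as `t → 0⁺`. -/
theorem stmt_8 (ε : ℝ) (hε : 0 < ε) (a b σ₁ σ₂ : ℝ → ℝ)
    (ha : ContDiffOn ℝ (⊤ : ℕ∞) a (Ioo 0 ε)) (hb : ContDiffOn ℝ (⊤ : ℕ∞) b (Ioo 0 ε))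
    (hσ₁ : ContDiffOn ℝ (⊤ : ℕ∞) σ₁ (Ico 0 ε)) (hσ₂ : ContDiffOn ℝ (⊤ : ℕ∞) σ₂ (Ico 0 ε))
    (hode₁ : ∀ t ∈ Ioo (0 : ℝ) ε, deriv (deriv σ₁) t + a t * deriv σ₁ t + b t * σ₁ t = 0)
    (hode₂ : ∀ t ∈ Ioo (0 : ℝ) ε, deriv (deriv σ₂) t + a t * deriv σ₂ t + b t * σ₂ t = 0)
    (h₁0 : σ₁ 0 = 0)
    (h₁1 : iteratedDerivWithin 1 σ₁ (Ico 0 ε) 0 = 0)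
    (h₁2 : iteratedDerivWithin 2 σ₁ (Ico 0 ε) 0 = 1)
    (h₂0 : σ₂ 0 = 0)
    (h₂1 : iteratedDerivWithin 1 σ₂ (Ico 0 ε) 0 = 0)
    (h₂2 : iteratedDerivWithin 2 σ₂ (Ico 0 ε) 0 = 0)
    (h₂3 : iteratedDerivWithin 3 σ₂ (Ico 0 ε) 0 = -1) :
    Tendsto (fun t => t * a t) (𝓝[>] (0 : ℝ)) (𝓝 (-4)) ∧
    Tendsto (fun t => t ^ 2 * b t) (𝓝[>] (0 : ℝ)) (𝓝 6) := by
  have hmem0 : (0:ℝ) ∈ Ico 0 ε := ⟨le_refl _, hε⟩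
  have hUD : UniqueDiffOn ℝ (Ico (0:ℝ) ε) := uniqueDiffOn_Ico 0 ε
  have hIoo : Ioo (0:ℝ) ε ∈ 𝓝[>] (0:ℝ) := Ioo_mem_nhdsGT_of_mem ⟨le_refl _, hε⟩
  set s : Set ℝ := Ico 0 ε with hs
  set F₁ := derivWithin σ₁ s with hF₁def
  set F₂ := derivWithin σ₂ s with hF₂def
  set G₁ := derivWithin F₁ s with hG₁def
  set G₂ := derivWithin F₂ s with hG₂def
  have hF₁c : ContDiffOn ℝ (⊤ : ℕ∞) F₁ s := hσ₁.derivWithin hUD (by simp)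
  have hF₂c : ContDiffOn ℝ (⊤ : ℕ∞) F₂ s := hσ₂.derivWithin hUD (by simp)
  have hG₁c : ContDiffOn ℝ (⊤ : ℕ∞) G₁ s := hF₁c.derivWithin hUD (by simp)
  have hG₂c : ContDiffOn ℝ (⊤ : ℕ∞) G₂ s := hF₂c.derivWithin hUD (by simp)
  have hsucc : ∀ (f : ℝ → ℝ) (k : ℕ), iteratedDerivWithin (k+1) f s 0
      = iteratedDerivWithin k (derivWithin f s) s 0 := fun f k =>
    congrFun iteratedDerivWithin_succ' 0
  -- jets of F₁, G₁, F₂, G₂ at 0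
  have jF₁0 : iteratedDerivWithin 0 F₁ s 0 = 0 := by
    rw [iteratedDerivWithin_zero, hF₁def, ← iteratedDerivWithin_zero (f := derivWithin σ₁ s),
      ← hsucc σ₁ 0]; exact h₁1
  have jF₁1 : iteratedDerivWithin 1 F₁ s 0 = 1 := by rw [hF₁def, ← hsucc σ₁ 1]; exact h₁2
  have jG₁0 : iteratedDerivWithin 0 G₁ s 0 = 1 := by rw [hG₁def, ← hsucc F₁ 0]; exact jF₁1
  have jF₂0 : iteratedDerivWithin 0 F₂ s 0 = 0 := by
    rw [iteratedDerivWithin_zero, hF₂def, ← iteratedDerivWithin_zero (f := derivWithin σ₂ s),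
      ← hsucc σ₂ 0]; exact h₂1
  have jF₂1 : iteratedDerivWithin 1 F₂ s 0 = 0 := by rw [hF₂def, ← hsucc σ₂ 1]; exact h₂2
  have jF₂2 : iteratedDerivWithin 2 F₂ s 0 = -1 := by rw [hF₂def, ← hsucc σ₂ 2]; exact h₂3
  have jG₂0 : iteratedDerivWithin 0 G₂ s 0 = 0 := by rw [hG₂def, ← hsucc F₂ 0]; exact jF₂1
  have jG₂1 : iteratedDerivWithin 1 G₂ s 0 = -1 := by rw [hG₂def, ← hsucc F₂ 1]; exact jF₂2
  -- limits
  have L1 : Tendsto (fun t => σ₁ t / t ^ 2) (𝓝[>] (0:ℝ)) (𝓝 (1/2)) := by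
    have := key_aux ε hε 2 σ₁ hσ₁ (by
      intro k hk; interval_cases k
      · rw [iteratedDerivWithin_zero]; exact h₁0
      · exact h₁1)
    rw [h₁2] at this
    norm_num [Nat.factorial] at this ⊢
    exact this
  have L2 : Tendsto (fun t => F₁ t / t) (𝓝[>] (0:ℝ)) (𝓝 1) := by
    have := key_aux ε hε 1 F₁ hF₁c (by
      intro k hk; interval_cases k; exact jF₁0)
    rw [jF₁1] at this
    norm_num [Nat.factorial] at this
    simpa using this
  have L3 : Tendsto G₁ (𝓝[>] (0:ℝ)) (𝓝 1) := by
    have := key_aux ε hε 0 G₁ hG₁c (by intro k hk; omega)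
    rw [jG₁0] at this
    norm_num [Nat.factorial] at this
    simpa using this
  have L4 : Tendsto (fun t => σ₂ t / t ^ 3) (𝓝[>] (0:ℝ)) (𝓝 (-(1/6))) := by
    have := key_aux ε hε 3 σ₂ hσ₂ (by
      intro k hk; interval_cases k
      · rw [iteratedDerivWithin_zero]; exact h₂0
      · exact h₂1
      · exact h₂2)
    rw [h₂3] at this
    norm_num [Nat.factorial] at this ⊢
    exact this
  have L5 : Tendsto (fun t => F₂ t / t ^ 2) (𝓝[>] (0:ℝ)) (𝓝 (-(1/2))) := by
    have := key_aux ε hε 2 F₂ hF₂c (by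
      intro k hk; interval_cases k
      · exact jF₂0
      · exact jF₂1)
    rw [jF₂2] at this
    norm_num [Nat.factorial] at this ⊢
    exact this
  have L6 : Tendsto (fun t => G₂ t / t) (𝓝[>] (0:ℝ)) (𝓝 (-1)) := by
    have := key_aux ε hε 1 G₂ hG₂c (by intro k hk; interval_cases k; exact jG₂0)
    rw [jG₂1] at this
    norm_num [Nat.factorial] at this
    simpa using this
  -- combined limits
  have hA : Tendsto (fun t => (σ₁ t / t ^ 2) * (G₂ t / t) - (σ₂ t / t ^ 3) * G₁ t)
      (𝓝[>] (0:ℝ)) (𝓝 (-(1/3))) := by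
    have := (L1.mul L6).sub (L4.mul L3)
    norm_num at this ⊢
    exact this
  have hD : Tendsto (fun t => (F₁ t / t) * (σ₂ t / t ^ 3) - (F₂ t / t ^ 2) * (σ₁ t / t ^ 2))
      (𝓝[>] (0:ℝ)) (𝓝 (1/12)) := by
    have := (L2.mul L4).sub (L5.mul L1)
    norm_num at this ⊢
    exact this
  have hB : Tendsto (fun t => (G₂ t / t) * (F₁ t / t) - G₁ t * (F₂ t / t ^ 2))
      (𝓝[>] (0:ℝ)) (𝓝 (-(1/2))) := by
    have := (L6.mul L2).sub (L3.mul L5)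
    norm_num at this ⊢
    exact this
  have hDne : ∀ᶠ t in 𝓝[>] (0:ℝ),
      (F₁ t / t) * (σ₂ t / t ^ 3) - (F₂ t / t ^ 2) * (σ₁ t / t ^ 2) ≠ 0 :=
    hD.eventually_ne (by norm_num)
  -- ODE in terms of F, G on Ioo
  have hFG : ∀ t ∈ Ioo (0:ℝ) ε, deriv σ₁ t = F₁ t ∧ deriv (deriv σ₁) t = G₁ t ∧
      deriv σ₂ t = F₂ t ∧ deriv (deriv σ₂) t = G₂ t := by
    intro t ht
    have hnb : s ∈ 𝓝 t := mem_of_superset (Ioo_mem_nhds ht.1 ht.2) Ioo_subset_Ico_self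
    have e1 : deriv σ₁ t = F₁ t := (derivWithin_of_mem_nhds hnb).symm
    have e3 : deriv σ₂ t = F₂ t := (derivWithin_of_mem_nhds hnb).symm
    have ev1 : deriv σ₁ =ᶠ[𝓝 t] F₁ := by
      filter_upwards [Ioo_mem_nhds ht.1 ht.2] with y hy
      exact (derivWithin_of_mem_nhds
        (mem_of_superset (Ioo_mem_nhds hy.1 hy.2) Ioo_subset_Ico_self)).symm
    have ev2 : deriv σ₂ =ᶠ[𝓝 t] F₂ := by
      filter_upwards [Ioo_mem_nhds ht.1 ht.2] with y hy
      exact (derivWithin_of_mem_nhds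
        (mem_of_superset (Ioo_mem_nhds hy.1 hy.2) Ioo_subset_Ico_self)).symm
    refine ⟨e1, ?_, e3, ?_⟩
    · rw [ev1.deriv_eq]; exact (derivWithin_of_mem_nhds hnb).symm
    · rw [ev2.deriv_eq]; exact (derivWithin_of_mem_nhds hnb).symm
  have main : ∀ᶠ t in 𝓝[>] (0:ℝ),
      t * a t = ((σ₁ t / t ^ 2) * (G₂ t / t) - (σ₂ t / t ^ 3) * G₁ t) /
        ((F₁ t / t) * (σ₂ t / t ^ 3) - (F₂ t / t ^ 2) * (σ₁ t / t ^ 2)) ∧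
      t ^ 2 * b t = (-((G₂ t / t) * (F₁ t / t) - G₁ t * (F₂ t / t ^ 2))) /
        ((F₁ t / t) * (σ₂ t / t ^ 3) - (F₂ t / t ^ 2) * (σ₁ t / t ^ 2)) := by
    filter_upwards [hIoo, hDne] with t ht hDt
    have ht0 : (0:ℝ) < t := ht.1
    have htne : t ≠ 0 := ht0.ne'
    obtain ⟨e1, e2, e3, e4⟩ := hFG t ht
    have heq1 := hode₁ t ht
    have heq2 := hode₂ t ht
    rw [e1, e2] at heq1
    rw [e3, e4] at heq2
    have hWval : (F₁ t / t) * (σ₂ t / t ^ 3) - (F₂ t / t ^ 2) * (σ₁ t / t ^ 2)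
        = (F₁ t * σ₂ t - F₂ t * σ₁ t) / t ^ 4 := by
      field_simp
    have hW : F₁ t * σ₂ t - F₂ t * σ₁ t ≠ 0 := by
      rw [hWval] at hDt
      intro h
      rw [h] at hDt
      simp at hDt
    have haW : a t * (F₁ t * σ₂ t - F₂ t * σ₁ t) = G₂ t * σ₁ t - G₁ t * σ₂ t := by
      linear_combination σ₂ t * heq1 - σ₁ t * heq2
    have hbW : b t * (F₁ t * σ₂ t - F₂ t * σ₁ t) = G₁ t * F₂ t - G₂ t * F₁ t := by
      linear_combination F₁ t * heq2 - F₂ t * heq1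
    have hAval : (σ₁ t / t ^ 2) * (G₂ t / t) - (σ₂ t / t ^ 3) * G₁ t
        = a t * (F₁ t * σ₂ t - F₂ t * σ₁ t) / t ^ 3 := by
      rw [haW]
      field_simp
    have hBval : -((G₂ t / t) * (F₁ t / t) - G₁ t * (F₂ t / t ^ 2))
        = b t * (F₁ t * σ₂ t - F₂ t * σ₁ t) / t ^ 2 := by
      rw [hbW]
      field_simp
      ring
    constructor
    · rw [hAval, hWval]
      field_simp
    · rw [hBval, hWval]
      field_simp
  constructor
  · apply Tendsto.congr' (by filter_upwards [main] with t h using h.1.symm)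
    have := hA.div hD (by norm_num : (1/12 : ℝ) ≠ 0)
    norm_num at this ⊢
    convert this using 2
    rfl
  · apply Tendsto.congr' (by filter_upwards [main] with t h using h.2.symm)
    have := (hB.neg).div hD (by norm_num : (1/12 : ℝ) ≠ 0)
    norm_num at this ⊢
    convert this using 2
    rfl
end
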